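/- arXiv:2412.20533 — 3 statements merged into one kernel-verified Lean document; each statement's English description precedes it below -/
import Mathlib

section
/- Let G be a connected weighted graph with weight w and let Φ be a continuous triangle function satisfying the standing conditions (symmetry, monotonicity, Φ(0,0)=0, the identity Φ(x,Φ(y,z))=Φ(z,Φ(x,y)), multiset subadditivity, and Φ(a,b) ≥ max{a,b}). Then d_Φ^w is the greatest element, with respect to pointwise order, of the family of all Φ-pseudosemimetrics ρ on V(G) satisfying ρ(u,v) ≤ w({u,v}) for every edge {u,v}; i.e., d_Φ^w is the subdominant Φ-pseudosemimetric for w. -/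
/-! Commutativity of `Φ` together with `Φ(x, Φ(y, z)) = Φ(z, Φ(x, y))` makes the `Φ`-weight of a
list of edge weights depend only on its multiset, and `Φ(a, b) ≥ max a b` makes it grow along
sub-multisets; hence a walk weighs at least as much as the path it contains, and by multiset
subadditivity a concatenation `x ⟶ z ⟶ y` weighs at most `Φ` of the weights of its two parts.
Passing to infima with the continuity of `Φ` gives the triangle inequality for `d_Φ^w`.
Conversely, for `ρ` in the family, `ρ(u, v)` is at most the `Φ`-weight of every walk from `u` to
`v`, by induction along the walk, using the triangle inequality of `ρ` at the second vertex and
the monotonicity of `Φ`. -/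

open scoped NNReal
open SimpleGraph

/-- Iterated triangle function: `PhiStar Φ x [y₁,...,yₖ] = Φ*(x, y₁, ..., yₖ)`. -/
def PhiStar (Φ : ℝ≥0 → ℝ≥0 → ℝ≥0) : ℝ≥0 → List ℝ≥0 → ℝ≥0
  | x, [] => x
  | x, y :: l => Φ x (PhiStar Φ y l)

/-- `Φ`-weight of a (possibly empty) list of weights. -/
def listPhi (Φ : ℝ≥0 → ℝ≥0 → ℝ≥0) : List ℝ≥0 → ℝ≥0
  | [] => 0
  | x :: l => PhiStar Φ x l

/-- `d` is a `Φ`-pseudosemimetric: symmetric, vanishing on the diagonal, and satisfying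
the generalized triangle inequality with triangle function `Φ`. -/
def IsPseudoSemimetricWith {X : Type*} (Φ : ℝ≥0 → ℝ≥0 → ℝ≥0) (d : X → X → ℝ≥0) : Prop :=
  (∀ x y, d x y = d y x) ∧ (∀ x, d x x = 0) ∧ ∀ x y z, d x y ≤ Φ (d x z) (d y z)

/-- Standing conditions on a continuous triangle function `Φ`. -/
def Standing (Φ : ℝ≥0 → ℝ≥0 → ℝ≥0) : Prop :=
  Continuous (fun q : ℝ≥0 × ℝ≥0 => Φ q.1 q.2) ∧
  (∀ x y, Φ x y = Φ y x) ∧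
  (∀ a, Monotone (Φ a)) ∧ (∀ b, Monotone fun a => Φ a b) ∧
  Φ 0 0 = 0 ∧
  (∀ x y z, Φ x (Φ y z) = Φ z (Φ x y)) ∧
  (∀ (a b c : ℝ≥0) (as bs cs : List ℝ≥0),
      (a ::ₘ (as : Multiset ℝ≥0)) ≤ (b ::ₘ (bs : Multiset ℝ≥0)) + (c ::ₘ (cs : Multiset ℝ≥0)) →
      PhiStar Φ a as ≤ Φ (PhiStar Φ b bs) (PhiStar Φ c cs)) ∧
  (∀ a b, max a b ≤ Φ a b)

/-- The shortest-`Φ`-path function `d_Φ^w`. -/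
noncomputable def dPhi {V : Type*} (G : SimpleGraph V) (Φ : ℝ≥0 → ℝ≥0 → ℝ≥0)
    (w : Sym2 V → ℝ≥0) (u v : V) : ℝ≥0 :=
  sInf {x | ∃ p : G.Walk u v, p.IsPath ∧ listPhi Φ (p.edges.map w) = x}

theorem le_apply_csInf_csInf {β : Type*} [TopologicalSpace β] [Preorder β]
    [ClosedIciTopology β] {f : ℝ≥0 → ℝ≥0 → β}
    (hf : Continuous fun q : ℝ≥0 × ℝ≥0 => f q.1 q.2) {s t : Set ℝ≥0}
    (hs : s.Nonempty) (ht : t.Nonempty) {c : β} (h : ∀ a ∈ s, ∀ b ∈ t, c ≤ f a b) :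
    c ≤ f (sInf s) (sInf t) := by
  have hclosed : IsClosed {q : ℝ≥0 × ℝ≥0 | c ≤ f q.1 q.2} := isClosed_Ici.preimage hf
  have hsub : s ×ˢ t ⊆ {q : ℝ≥0 × ℝ≥0 | c ≤ f q.1 q.2} := fun q hq => h _ hq.1 _ hq.2
  have hmem : (sInf s, sInf t) ∈ closure (s ×ˢ t) := by
    rw [closure_prod_eq]
    exact ⟨csInf_mem_closure hs (OrderBot.bddBelow s), csInf_mem_closure ht (OrderBot.bddBelow t)⟩
  exact hclosed.closure_subset_iff.mpr hsub hmem

namespace Standing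

variable {Φ : ℝ≥0 → ℝ≥0 → ℝ≥0} (hΦ : Standing Φ)
include hΦ

theorem continuous : Continuous fun q : ℝ≥0 × ℝ≥0 => Φ q.1 q.2 := hΦ.1

theorem comm (x y : ℝ≥0) : Φ x y = Φ y x := hΦ.2.1 x y

theorem monotone_right (a : ℝ≥0) : Monotone (Φ a) := hΦ.2.2.1 a

theorem monotone_left (b : ℝ≥0) : Monotone fun a => Φ a b := hΦ.2.2.2.1 b

theorem phiStar_le_phi {a b c : ℝ≥0} {as bs cs : List ℝ≥0}
    (h : (a ::ₘ (as : Multiset ℝ≥0)) ≤ (b ::ₘ (bs : Multiset ℝ≥0)) + (c ::ₘ (cs : Multiset ℝ≥0))) :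
    PhiStar Φ a as ≤ Φ (PhiStar Φ b bs) (PhiStar Φ c cs) :=
  hΦ.2.2.2.2.2.2.1 a b c as bs cs h

theorem le_right (a b : ℝ≥0) : b ≤ Φ a b :=
  (le_max_right a b).trans (hΦ.2.2.2.2.2.2.2 a b)

theorem left_comm (x y z : ℝ≥0) : Φ x (Φ y z) = Φ y (Φ x z) := by
  have rotate := hΦ.2.2.2.2.2.1
  rw [rotate x y z, rotate y x z, hΦ.comm x y]

theorem phiStar_cons (x y : ℝ≥0) (l : List ℝ≥0) :
    PhiStar Φ x (y :: l) = Φ y (PhiStar Φ x l) := by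
  cases l with
  | nil => exact hΦ.comm x y
  | cons z t => exact hΦ.left_comm x y (PhiStar Φ z t)

theorem phiStar_perm {l₁ l₂ : List ℝ≥0} (h : l₁.Perm l₂) (x : ℝ≥0) :
    PhiStar Φ x l₁ = PhiStar Φ x l₂ := by
  induction h generalizing x with
  | nil => rfl
  | cons y _ ih => exact congrArg (Φ x) (ih y)
  | swap y z l => simp only [hΦ.phiStar_cons, hΦ.left_comm]
  | trans _ _ ih₁ ih₂ => rw [ih₁, ih₂]

theorem listPhi_perm {l₁ l₂ : List ℝ≥0} (h : l₁.Perm l₂) : listPhi Φ l₁ = listPhi Φ l₂ := by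
  induction h with
  | nil => rfl
  | cons y h _ => exact hΦ.phiStar_perm h y
  | swap y z l => exact hΦ.phiStar_cons _ _ _
  | trans _ _ ih₁ ih₂ => rw [ih₁, ih₂]

theorem listPhi_reverse (l : List ℝ≥0) : listPhi Φ l.reverse = listPhi Φ l :=
  hΦ.listPhi_perm l.reverse_perm

theorem phiStar_le_of_sublist {l₁ l₂ : List ℝ≥0} (h : l₁.Sublist l₂) (a : ℝ≥0) :
    PhiStar Φ a l₁ ≤ PhiStar Φ a l₂ := by
  induction h with
  | slnil => exact le_rfl
  | cons b _ ih => exact ih.trans ((hΦ.le_right b _).trans_eq (hΦ.phiStar_cons a b _).symm)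
  | cons_cons b _ ih =>
    rw [hΦ.phiStar_cons, hΦ.phiStar_cons]
    exact hΦ.monotone_right b ih

theorem listPhi_le_of_sublist {l₁ l₂ : List ℝ≥0} (h : l₁.Sublist l₂) :
    listPhi Φ l₁ ≤ listPhi Φ l₂ := by
  induction h with
  | slnil => exact le_rfl
  | @cons l₁ l₂ b _ ih =>
    refine ih.trans ?_
    cases l₂ with
    | nil => exact zero_le
    | cons c t => exact hΦ.le_right b (PhiStar Φ c t)
  | cons_cons b h _ => exact hΦ.phiStar_le_of_sublist h b

theorem listPhi_le_of_subperm {l₁ l₂ : List ℝ≥0} (h : l₁.Subperm l₂) :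
    listPhi Φ l₁ ≤ listPhi Φ l₂ := by
  obtain ⟨l, hperm, hsub⟩ := h
  exact (hΦ.listPhi_perm hperm).symm.trans_le (hΦ.listPhi_le_of_sublist hsub)

theorem listPhi_append_le (l₁ l₂ : List ℝ≥0) :
    listPhi Φ (l₁ ++ l₂) ≤ Φ (listPhi Φ l₁) (listPhi Φ l₂) := by
  match l₁, l₂ with
  | [], l₂ => exact hΦ.le_right 0 _
  | _ :: _, [] =>
    rw [List.append_nil, hΦ.comm]
    exact hΦ.le_right 0 _
  | _ :: _, _ :: _ => exact hΦ.phiStar_le_phi (le_of_eq (by simp))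

end Standing

section Graph

variable {V : Type*} {G : SimpleGraph V} {w : Sym2 V → ℝ≥0} {Φ : ℝ≥0 → ℝ≥0 → ℝ≥0}

theorem dPhi_set_nonempty (hconn : G.Preconnected) (u v : V) :
    {x | ∃ p : G.Walk u v, p.IsPath ∧ listPhi Φ (p.edges.map w) = x}.Nonempty := by
  classical
  obtain ⟨p⟩ := hconn u v
  exact ⟨_, p.bypass, p.bypass_isPath, rfl⟩

theorem dPhi_self (u : V) : dPhi G Φ w u u = 0 :=
  le_antisymm (csInf_le' ⟨Walk.nil, Walk.IsPath.nil, rfl⟩) zero_le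

variable (hΦ : Standing Φ)
include hΦ

theorem IsPseudoSemimetricWith.le_listPhi_walk {ρ : V → V → ℝ≥0}
    (hρ : IsPseudoSemimetricWith Φ ρ)
    (hw : ∀ u v, G.Adj u v → ρ u v ≤ w s(u, v)) {u v : V} (p : G.Walk u v) :
    ρ u v ≤ listPhi Φ (p.edges.map w) := by
  induction p with
  | nil => exact (hρ.2.1 _).le
  | @cons u b v h q ih =>
    cases q with
    | nil => simpa [listPhi, PhiStar] using hw _ _ h
    | cons h' q' =>
      calc ρ u v ≤ Φ (ρ u b) (ρ v b) := hρ.2.2 u v b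
        _ ≤ Φ (w s(u, b)) (listPhi Φ ((Walk.cons h' q').edges.map w)) :=
          (hΦ.monotone_right _ ((hρ.1 v b).trans_le ih)).trans (hΦ.monotone_left _ (hw _ _ h))
        _ = listPhi Φ ((Walk.cons h (Walk.cons h' q')).edges.map w) := rfl

theorem dPhi_le_listPhi_walk {u v : V} (p : G.Walk u v) :
    dPhi G Φ w u v ≤ listPhi Φ (p.edges.map w) := by
  classical
  refine le_trans (csInf_le' ⟨p.bypass, p.bypass_isPath, rfl⟩) (hΦ.listPhi_le_of_subperm ?_)
  obtain ⟨l, hperm, hsub⟩ := p.bypass_isPath.edges_nodup.subperm p.edges_bypass_subset_edges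
  exact ⟨l.map w, hperm.map w, hsub.map w⟩

theorem listPhi_edges_reverse {u v : V} (p : G.Walk u v) :
    listPhi Φ (p.reverse.edges.map w) = listPhi Φ (p.edges.map w) := by
  rw [Walk.edges_reverse, List.map_reverse, hΦ.listPhi_reverse]

theorem dPhi_comm (u v : V) : dPhi G Φ w u v = dPhi G Φ w v u := by
  unfold dPhi
  congr 1
  ext x
  constructor <;> rintro ⟨p, hp, rfl⟩ <;>
    exact ⟨p.reverse, hp.reverse, listPhi_edges_reverse hΦ p⟩

theorem dPhi_le_phi_walk {x y z : V} (p : G.Walk x z) (q : G.Walk y z) :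
    dPhi G Φ w x y ≤ Φ (listPhi Φ (p.edges.map w)) (listPhi Φ (q.edges.map w)) :=
  calc dPhi G Φ w x y ≤ listPhi Φ ((p.append q.reverse).edges.map w) :=
        dPhi_le_listPhi_walk hΦ _
    _ ≤ Φ (listPhi Φ (p.edges.map w)) (listPhi Φ (q.reverse.edges.map w)) := by
        rw [Walk.edges_append, List.map_append]
        exact hΦ.listPhi_append_le _ _
    _ = Φ (listPhi Φ (p.edges.map w)) (listPhi Φ (q.edges.map w)) := by
        rw [listPhi_edges_reverse hΦ]

theorem dPhi_triangle (hconn : G.Preconnected) (x y z : V) :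
    dPhi G Φ w x y ≤ Φ (dPhi G Φ w x z) (dPhi G Φ w y z) := by
  refine le_apply_csInf_csInf hΦ.continuous (dPhi_set_nonempty hconn x z)
    (dPhi_set_nonempty hconn y z) ?_
  rintro _ ⟨p, -, rfl⟩ _ ⟨q, -, rfl⟩
  exact dPhi_le_phi_walk hΦ p q

theorem dPhi_le_of_adj {u v : V} (h : G.Adj u v) : dPhi G Φ w u v ≤ w s(u, v) :=
  dPhi_le_listPhi_walk hΦ (Walk.cons h Walk.nil)

theorem IsPseudoSemimetricWith.le_dPhi (hconn : G.Preconnected) {ρ : V → V → ℝ≥0}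
    (hρ : IsPseudoSemimetricWith Φ ρ) (hw : ∀ u v, G.Adj u v → ρ u v ≤ w s(u, v)) (x y : V) :
    ρ x y ≤ dPhi G Φ w x y := by
  refine le_csInf (dPhi_set_nonempty hconn x y) ?_
  rintro _ ⟨p, -, rfl⟩
  exact hρ.le_listPhi_walk hΦ hw p

end Graph

/-- `d_Φ^w` is the subdominant `Φ`-pseudosemimetric: it belongs to the
family `𝔉_Φ^w` of `Φ`-pseudosemimetrics bounded above by `w` on edges, and it is the
greatest element of this family in the pointwise order. -/
theorem stmt_6 {V : Type*} (G : SimpleGraph V) (hconn : G.Preconnected)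
    (w : Sym2 V → ℝ≥0) (Φ : ℝ≥0 → ℝ≥0 → ℝ≥0) (hΦ : Standing Φ) :
    IsPseudoSemimetricWith Φ (dPhi G Φ w) ∧
    (∀ u v, G.Adj u v → dPhi G Φ w u v ≤ w s(u, v)) ∧
    (∀ ρ : V → V → ℝ≥0, IsPseudoSemimetricWith Φ ρ →
      (∀ u v, G.Adj u v → ρ u v ≤ w s(u, v)) →
      ∀ x y, ρ x y ≤ dPhi G Φ w x y) := by
  exact ⟨⟨dPhi_comm hΦ, dPhi_self, dPhi_triangle hΦ hconn⟩,
    fun _ _ h => dPhi_le_of_adj hΦ h, fun _ hρ hw => hρ.le_dPhi hΦ hconn hw⟩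
end

section
/- Let (G,w) be a weighted graph and p > 0. The weight w extends to a pseudosemimetric d on V(G) satisfying the power triangle inequality d(x,y) ≤ (d(x,z)^p + d(z,y)^p)^{1/p} and agreeing with w on the edges of G, if and only if for every cycle C ⊆ G and every edge e ∈ E(C), w(e)^p ≤ ∑_{ẽ ∈ E(C), ẽ ≠ e} w(ẽ)^p. -/
/-!
Raising to the power `p` turns the power triangle inequality into the ordinary one, so it is enough
to treat `p = 1` with edge weights `w ^ p`. A pseudometric that agrees with the weights on edges is
bounded on every walk by the walk's total weight, which gives the cycle condition. Conversely, the
cycle condition says exactly that no walk between the ends of an edge is lighter than the edge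
itself (shorten the walk to a path: either it uses the edge, or it closes a cycle with it), so the
least walk weight is a pseudometric extending the weights. It may be infinite between components;
truncating it at `f x + f y`, where `f` is the distance to a chosen vertex of the component, makes
it finite without changing it inside components.
-/

open scoped NNReal ENNReal

section Truncation

variable {α : Type*} (D : α → α → ℝ≥0∞) (f : α → ℝ≥0∞)

def truncatedDist (x y : α) : ℝ≥0∞ := min (D x y) (f x + f y)

variable {D f}

lemma truncatedDist_self (hD : ∀ x, D x x = 0) (x : α) : truncatedDist D f x x = 0 := by
  simp [truncatedDist, hD]

lemma truncatedDist_comm (hD : ∀ x y, D x y = D y x) (x y : α) :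
    truncatedDist D f x y = truncatedDist D f y x := by
  rw [truncatedDist, truncatedDist, hD, add_comm]

lemma truncatedDist_ne_top (hf : ∀ x, f x ≠ ⊤) (x y : α) : truncatedDist D f x y ≠ ⊤ :=
  ne_top_of_le_ne_top (ENNReal.add_ne_top.2 ⟨hf x, hf y⟩) (min_le_right _ _)

lemma truncatedDist_triangle (hD : ∀ x y z, D x y ≤ D x z + D z y) (hDcomm : ∀ x y, D x y = D y x)
    (hf : ∀ x z, f x ≤ D x z + f z) (x y z : α) :
    truncatedDist D f x y ≤ truncatedDist D f x z + truncatedDist D f z y := by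
  simp only [truncatedDist, min_add, add_min]
  refine le_min (le_min ?_ ?_) (le_min ?_ ?_)
  · exact min_le_of_left_le (hD x y z)
  · refine min_le_of_right_le ?_
    calc f x + f y ≤ f x + (D z y + f z) := by gcongr; rw [← hDcomm]; exact hf y z
      _ = f x + f z + D z y := by ring
  · refine min_le_of_right_le ?_
    calc f x + f y ≤ D x z + f z + f y := by gcongr; exact hf x z
      _ = D x z + (f z + f y) := add_assoc _ _ _
  · exact min_le_of_right_le (add_le_add le_self_add le_add_self)

end Truncation

namespace SimpleGraph

variable {V : Type*} {G : SimpleGraph V} (c : Sym2 V → ℝ≥0)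

def Walk.cost {x y : V} (W : G.Walk x y) : ℝ≥0 := (W.edges.map c).sum

namespace Walk

@[simp]
lemma cost_nil {x : V} : (nil : G.Walk x x).cost c = 0 := rfl

@[simp]
lemma cost_cons {x y z : V} (h : G.Adj x y) (W : G.Walk y z) :
    (cons h W).cost c = c s(x, y) + W.cost c := by
  simp [cost]

lemma cost_append {x y z : V} (W₁ : G.Walk x y) (W₂ : G.Walk y z) :
    (W₁.append W₂).cost c = W₁.cost c + W₂.cost c := by
  simp [cost]

lemma cost_reverse {x y : V} (W : G.Walk x y) : W.reverse.cost c = W.cost c := by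
  simp [cost, List.sum_reverse]

lemma cost_bypass_le [DecidableEq V] {x y : V} (W : G.Walk x y) : W.bypass.cost c ≤ W.cost c :=
  (W.edges_bypass_sublist_edges.map c).sum_le_sum fun _ _ => zero_le

lemma le_cost_of_triangle {d : V → V → ℝ≥0} (hself : ∀ x, d x x = 0)
    (htri : ∀ x y z, d x y ≤ d x z + d z y) (hedge : ∀ u v, G.Adj u v → d u v ≤ c s(u, v))
    {x y : V} (W : G.Walk x y) : d x y ≤ W.cost c := by
  induction W with
  | nil => simp [hself]
  | @cons u v z h W ih =>
    calc d u z ≤ d u v + d v z := htri u z v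
      _ ≤ c s(u, v) + W.cost c := add_le_add (hedge u v h) ih
      _ = (cons h W).cost c := (cost_cons c h W).symm

end Walk

variable (G) in
noncomputable def weightedEDist (x y : V) : ℝ≥0∞ := ⨅ W : G.Walk x y, (W.cost c : ℝ≥0∞)

lemma weightedEDist_le_cost {x y : V} (W : G.Walk x y) : G.weightedEDist c x y ≤ W.cost c :=
  iInf_le _ W

lemma weightedEDist_self (x : V) : G.weightedEDist c x x = 0 :=
  nonpos_iff_eq_zero.1 <| (weightedEDist_le_cost c Walk.nil).trans_eq (by simp)

lemma weightedEDist_comm (x y : V) : G.weightedEDist c x y = G.weightedEDist c y x := by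
  have hle : ∀ a b : V, G.weightedEDist c a b ≤ G.weightedEDist c b a := fun a b =>
    le_iInf fun W => (weightedEDist_le_cost c W.reverse).trans_eq (by rw [Walk.cost_reverse])
  exact le_antisymm (hle x y) (hle y x)

lemma weightedEDist_triangle (x y z : V) :
    G.weightedEDist c x y ≤ G.weightedEDist c x z + G.weightedEDist c z y := by
  simp only [weightedEDist, ENNReal.iInf_add, ENNReal.add_iInf]
  refine le_iInf₂ fun W₂ W₁ => ?_
  exact (weightedEDist_le_cost c (W₁.append W₂)).trans_eq (by simp [Walk.cost_append])

lemma Reachable.weightedEDist_ne_top {x y : V} (h : G.Reachable x y) :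
    G.weightedEDist c x y ≠ ⊤ :=
  let ⟨W⟩ := h
  ((weightedEDist_le_cost c W).trans_lt ENNReal.coe_lt_top).ne

lemma reachable_of_weightedEDist_ne_top {x y : V} (h : G.weightedEDist c x y ≠ ⊤) :
    G.Reachable x y := by
  by_contra hxy
  have : IsEmpty (G.Walk x y) := ⟨fun W => hxy ⟨W⟩⟩
  exact h (by simp [weightedEDist])

lemma weightedEDist_adj [DecidableEq V]
    (hcycle : ∀ (a b : V) (h : G.Adj a b) (q : G.Walk b a),
      (Walk.cons h q).IsCycle → c s(a, b) ≤ q.cost c)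
    {u v : V} (h : G.Adj u v) : G.weightedEDist c u v = c s(u, v) := by
  refine le_antisymm ((weightedEDist_le_cost c (Walk.cons h Walk.nil)).trans_eq (by simp)) ?_
  refine le_iInf fun W =>
    ENNReal.coe_le_coe.2 ((?_ : _ ≤ W.bypass.cost c).trans (W.cost_bypass_le c))
  by_cases huv : s(u, v) ∈ W.bypass.edges
  · exact List.single_le_sum (fun _ _ => zero_le) _ (List.mem_map_of_mem huv)
  · have hcyc : (Walk.cons h.symm W.bypass).IsCycle :=
      Walk.cons_isCycle_iff _ _ |>.2 ⟨W.bypass_isPath, by rwa [Sym2.eq_swap]⟩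
    simpa [Sym2.eq_swap] using hcycle v u h.symm W.bypass hcyc

variable (G) in
noncomputable def weightedEDistToRep (x : V) : ℝ≥0∞ :=
  G.weightedEDist c x (G.connectedComponentMk x).out

lemma reachable_connectedComponentMk_out (x : V) : G.Reachable x (G.connectedComponentMk x).out :=
  ConnectedComponent.exact (Quot.out_eq _).symm

lemma weightedEDistToRep_ne_top (x : V) : G.weightedEDistToRep c x ≠ ⊤ :=
  (reachable_connectedComponentMk_out x).weightedEDist_ne_top c

lemma weightedEDistToRep_le (x z : V) :
    G.weightedEDistToRep c x ≤ G.weightedEDist c x z + G.weightedEDistToRep c z := by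
  rcases eq_or_ne (G.weightedEDist c x z) ⊤ with hxz | hxz
  · simp [hxz]
  have hrep : G.connectedComponentMk x = G.connectedComponentMk z :=
    ConnectedComponent.sound (reachable_of_weightedEDist_ne_top c hxz)
  rw [weightedEDistToRep, weightedEDistToRep, hrep]
  exact weightedEDist_triangle c _ _ _

lemma Reachable.weightedEDist_le_toRep_add {x y : V} (h : G.Reachable x y) :
    G.weightedEDist c x y ≤ G.weightedEDistToRep c x + G.weightedEDistToRep c y := by
  rw [weightedEDistToRep, weightedEDistToRep, ConnectedComponent.sound h,
    weightedEDist_comm c y]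
  exact weightedEDist_triangle c _ _ _

theorem exists_pseudometric_eq_of_cycle_condition
    (hcycle : ∀ (a b : V) (h : G.Adj a b) (q : G.Walk b a),
      (Walk.cons h q).IsCycle → c s(a, b) ≤ q.cost c) :
    ∃ ρ : V → V → ℝ≥0, (∀ x y, ρ x y = ρ y x) ∧ (∀ x, ρ x x = 0) ∧
      (∀ x y z, ρ x y ≤ ρ x z + ρ z y) ∧ ∀ u v, G.Adj u v → ρ u v = c s(u, v) := by
  classical
  set σ := truncatedDist (G.weightedEDist c) (G.weightedEDistToRep c)
  have hσ_ne_top : ∀ x y, σ x y ≠ ⊤ := truncatedDist_ne_top (weightedEDistToRep_ne_top c)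
  refine ⟨fun x y => (σ x y).toNNReal, fun x y => ?_, fun x => ?_, fun x y z => ?_,
    fun u v h => ?_⟩ <;> beta_reduce
  · exact congrArg ENNReal.toNNReal (truncatedDist_comm (weightedEDist_comm c) x y)
  · simp [σ, truncatedDist_self (weightedEDist_self c)]
  · rw [← ENNReal.toNNReal_add (hσ_ne_top x z) (hσ_ne_top z y)]
    exact ENNReal.toNNReal_mono (ENNReal.add_ne_top.2 ⟨hσ_ne_top x z, hσ_ne_top z y⟩)
      (truncatedDist_triangle (weightedEDist_triangle c) (weightedEDist_comm c)
        (weightedEDistToRep_le c) x y z)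
  · rw [show σ u v = G.weightedEDist c u v from
      min_eq_left (h.reachable.weightedEDist_le_toRep_add c), weightedEDist_adj c hcycle h]
    rfl

end SimpleGraph

open SimpleGraph

lemma NNReal.le_rpow_add_rpow_one_div_iff {p : ℝ} (hp : 0 < p) {a b c : ℝ≥0} :
    a ≤ (b ^ p + c ^ p) ^ (1 / p) ↔ a ^ p ≤ b ^ p + c ^ p := by
  rw [one_div, NNReal.le_rpow_inv_iff hp]

/-- for `p > 0`, `w` extends to a pseudosemimetric satisfying the power
triangle inequality `d(x,y) ≤ (d(x,z)^p + d(z,y)^p)^(1/p)` iff for every cycle and every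
edge `e` of it, `w(e)^p ≤ ∑_{ẽ ∈ C∖e} w(ẽ)^p`. -/
theorem stmt_13 {V : Type*} (G : SimpleGraph V) (w : Sym2 V → ℝ≥0)
    (p : ℝ) (hp : 0 < p) :
    (∃ d : V → V → ℝ≥0,
        (∀ x y, d x y = d y x) ∧ (∀ x, d x x = 0) ∧
        (∀ x y z, d x y ≤ (d x z ^ p + d z y ^ p) ^ (1 / p)) ∧
        ∀ u v, G.Adj u v → d u v = w s(u, v)) ↔
    (∀ (a b : V) (h : G.Adj a b) (q : G.Walk b a),
        (SimpleGraph.Walk.cons h q).IsCycle →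
        w s(a, b) ^ p ≤ (q.edges.map fun e => w e ^ p).sum) := by
  constructor
  · rintro ⟨d, hsymm, hself, htri, hedge⟩ a b hab q -
    have hcost : d b a ^ p ≤ q.cost fun e => w e ^ p :=
      q.le_cost_of_triangle _ (fun x => by simp [hself, hp.ne'])
        (fun x y z => (NNReal.le_rpow_add_rpow_one_div_iff hp).1 (htri x y z))
        (fun u v h => (congrArg (· ^ p) (hedge u v h)).le)
    rwa [hsymm, hedge a b hab] at hcost
  · intro hcycle
    obtain ⟨ρ, hsymm, hself, htri, hedge⟩ :=
      exists_pseudometric_eq_of_cycle_condition (fun e => w e ^ p) hcycle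
    have hρ : ∀ x y, (ρ x y ^ (1 / p)) ^ p = ρ x y := fun x y => NNReal.rpow_self_rpow_inv hp.ne' _
    refine ⟨fun x y => ρ x y ^ (1 / p), fun x y => congrArg (· ^ (1 / p)) (hsymm x y),
      fun x => ?_, fun x y z => ?_, fun u v h => ?_⟩ <;> beta_reduce
    · simp [hself, hp.ne']
    · rw [NNReal.le_rpow_add_rpow_one_div_iff hp, hρ, hρ, hρ]
      exact htri x y z
    · rw [hedge u v h, NNReal.rpow_inv_rpow_self hp.ne']
end

section
/- Let (G,w) be a weighted graph. The weight w extends to a pseudometric on V(G) (agreeing with w on edges) if and only if for every cycle C ⊆ G the inequality 2·max{w(e) : e ∈ E(C)} ≤ ∑_{e ∈ E(C)} w(e) holds. -/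
/-!
Necessity: the rest of a cycle through an edge `uv` is a walk from `v` to `u`, so by the triangle
inequality its weight is at least `d(u, v) = w(uv)`.

Sufficiency: take the infimum of the weights of walks, an extended pseudometric. A lightest
`u`–`v` walk may be taken to be a path; for an edge `uv` such a path either contains `uv` or closes
a cycle with it, so the cycle inequality makes the edge itself a lightest walk. Infinite distances
(between components) are then replaced by the sum of the distances to fixed representatives of the
two components, which keeps the triangle inequality.
-/

open scoped NNReal ENNReal
open SimpleGraph

section Glue

variable {α : Type*} (e : α → α → ℝ≥0∞)

noncomputable def finiteClassRep (x : α) : α :=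
  @Classical.epsilon α ⟨x⟩ fun y => e x y ≠ ⊤

/-- Points at infinite `e`-distance are joined through the representatives of their classes. -/
noncomputable def gluedEDist (x y : α) : ℝ≥0∞ :=
  if e x y = ⊤ then e x (finiteClassRep e x) + e y (finiteClassRep e y) else e x y

variable {e}

theorem edist_finiteClassRep_ne_top (hself : ∀ x, e x x = 0) (x : α) :
    e x (finiteClassRep e x) ≠ ⊤ :=
  @Classical.epsilon_spec α (fun y => e x y ≠ ⊤) ⟨x, by simp [hself]⟩

theorem edist_ne_top_trans (htri : ∀ x y z, e x y ≤ e x z + e z y) {x y z : α}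
    (hxz : e x z ≠ ⊤) (hzy : e z y ≠ ⊤) : e x y ≠ ⊤ :=
  ne_top_of_le_ne_top (ENNReal.add_ne_top.2 ⟨hxz, hzy⟩) (htri x y z)

theorem finiteClassRep_eq (hcomm : ∀ x y, e x y = e y x) (htri : ∀ x y z, e x y ≤ e x z + e z y)
    {x y : α} (h : e x y ≠ ⊤) : finiteClassRep e x = finiteClassRep e y := by
  have : (fun z => e x z ≠ ⊤) = fun z => e y z ≠ ⊤ := by
    ext z
    exact ⟨edist_ne_top_trans htri (hcomm x y ▸ h), edist_ne_top_trans htri h⟩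
  simp only [finiteClassRep, this]

theorem gluedEDist_ne_top (hself : ∀ x, e x x = 0) (x y : α) : gluedEDist e x y ≠ ⊤ := by
  unfold gluedEDist
  split_ifs with h
  · exact ENNReal.add_ne_top.2
      ⟨edist_finiteClassRep_ne_top hself x, edist_finiteClassRep_ne_top hself y⟩
  · exact h

theorem gluedEDist_comm (hcomm : ∀ x y, e x y = e y x) (x y : α) :
    gluedEDist e x y = gluedEDist e y x := by
  simp only [gluedEDist, hcomm x y, add_comm]

theorem gluedEDist_self (hself : ∀ x, e x x = 0) (x : α) : gluedEDist e x x = 0 := by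
  simp [gluedEDist, hself]

theorem gluedEDist_eq_of_ne_top {x y : α} (h : e x y ≠ ⊤) : gluedEDist e x y = e x y :=
  if_neg h

theorem edist_finiteClassRep_le (hcomm : ∀ x y, e x y = e y x)
    (htri : ∀ x y z, e x y ≤ e x z + e z y) (x z : α) :
    e x (finiteClassRep e x) ≤ gluedEDist e x z + e z (finiteClassRep e z) := by
  by_cases h : e x z = ⊤
  · simp only [gluedEDist, if_pos h, add_assoc]
    exact le_self_add
  · rw [gluedEDist_eq_of_ne_top h, finiteClassRep_eq hcomm htri h]
    exact htri _ _ _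

theorem gluedEDist_le (hcomm : ∀ x y, e x y = e y x) (htri : ∀ x y z, e x y ≤ e x z + e z y)
    (x y : α) : gluedEDist e x y ≤ e x (finiteClassRep e x) + e y (finiteClassRep e y) := by
  by_cases h : e x y = ⊤
  · rw [gluedEDist, if_pos h]
  · rw [gluedEDist_eq_of_ne_top h, finiteClassRep_eq hcomm htri h, hcomm y]
    exact htri _ _ _

theorem gluedEDist_triangle_of_eq_top (hcomm : ∀ x y, e x y = e y x)
    (htri : ∀ x y z, e x y ≤ e x z + e z y) {x y z : α} (h : e x z = ⊤) :
    gluedEDist e x y ≤ gluedEDist e x z + gluedEDist e z y := by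
  calc gluedEDist e x y ≤ e x (finiteClassRep e x) + e y (finiteClassRep e y) :=
        gluedEDist_le hcomm htri x y
    _ ≤ e x (finiteClassRep e x) + (gluedEDist e y z + e z (finiteClassRep e z)) := by
        gcongr; exact edist_finiteClassRep_le hcomm htri y z
    _ = gluedEDist e x z + gluedEDist e z y := by
        rw [gluedEDist_comm hcomm y z, show gluedEDist e x z = _ from if_pos h]
        ring

theorem gluedEDist_triangle (hcomm : ∀ x y, e x y = e y x) (htri : ∀ x y z, e x y ≤ e x z + e z y)
    (x y z : α) : gluedEDist e x y ≤ gluedEDist e x z + gluedEDist e z y := by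
  by_cases hxz : e x z = ⊤
  · exact gluedEDist_triangle_of_eq_top hcomm htri hxz
  by_cases hzy : e z y = ⊤
  · rw [gluedEDist_comm hcomm x y, gluedEDist_comm hcomm x z, gluedEDist_comm hcomm z y,
      add_comm]
    exact gluedEDist_triangle_of_eq_top hcomm htri (hcomm z y ▸ hzy)
  rw [gluedEDist_eq_of_ne_top (edist_ne_top_trans htri hxz hzy),
    gluedEDist_eq_of_ne_top hxz, gluedEDist_eq_of_ne_top hzy]
  exact htri x y z

theorem exists_pseudometric_eq_of_ne_top (hcomm : ∀ x y, e x y = e y x) (hself : ∀ x, e x x = 0)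
    (htri : ∀ x y z, e x y ≤ e x z + e z y) :
    ∃ d : α → α → ℝ≥0,
      (∀ x y, d x y = d y x) ∧ (∀ x, d x x = 0) ∧ (∀ x y z, d x y ≤ d x z + d z y) ∧
      ∀ x y, e x y ≠ ⊤ → (d x y : ℝ≥0∞) = e x y := by
  have hfin := gluedEDist_ne_top hself
  refine ⟨fun x y => (gluedEDist e x y).toNNReal,
    fun x y => by dsimp only; rw [gluedEDist_comm hcomm],
    fun x => by simp [gluedEDist_self hself], fun x y z => ?_, fun x y h => ?_⟩
  · rw [← ENNReal.toNNReal_add (hfin _ _) (hfin _ _)]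
    exact ENNReal.toNNReal_mono (ENNReal.add_ne_top.2 ⟨hfin _ _, hfin _ _⟩)
      (gluedEDist_triangle hcomm htri x y z)
  · rw [ENNReal.coe_toNNReal (hfin _ _), gluedEDist_eq_of_ne_top h]

end Glue

namespace SimpleGraph

variable {V : Type*} {G : SimpleGraph V} (w : Sym2 V → ℝ≥0)

namespace Walk

noncomputable def weight {x y : V} (p : G.Walk x y) : ℝ≥0 := (p.edges.map w).sum

@[simp] theorem weight_nil {x : V} : (nil : G.Walk x x).weight w = 0 := rfl

@[simp] theorem weight_cons {x y z : V} (h : G.Adj x y) (p : G.Walk y z) :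
    (cons h p).weight w = w s(x, y) + p.weight w := by
  simp [weight]

theorem weight_append {x y z : V} (p : G.Walk x y) (q : G.Walk y z) :
    (p.append q).weight w = p.weight w + q.weight w := by
  simp [weight, edges_append]

theorem weight_reverse {x y : V} (p : G.Walk x y) : p.reverse.weight w = p.weight w := by
  simp [weight, edges_reverse, List.sum_reverse]

theorem weight_bypass_le [DecidableEq V] {x y : V} (p : G.Walk x y) :
    p.bypass.weight w ≤ p.weight w :=
  (p.edges_bypass_sublist_edges.map w).sum_le_sum fun _ _ => zero_le

theorem weight_le_of_mem_edges {x y : V} (p : G.Walk x y) {e : Sym2 V} (he : e ∈ p.edges) :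
    w e ≤ p.weight w :=
  List.single_le_sum (fun _ _ => zero_le) _ (List.mem_map_of_mem he)

end Walk

variable {w} {d : V → V → ℝ≥0}

theorem dist_le_weight (hself : ∀ x, d x x = 0) (htri : ∀ x y z, d x y ≤ d x z + d z y)
    (hadj : ∀ u v, G.Adj u v → d u v = w s(u, v)) {x y : V} (p : G.Walk x y) :
    d x y ≤ p.weight w := by
  induction p with
  | nil => simp [hself]
  | @cons x v y h p ih =>
    rw [Walk.weight_cons, ← hadj x v h]
    exact (htri x y v).trans (add_le_add_right ih _)

theorem two_mul_le_weight_add_dist (hcomm : ∀ x y, d x y = d y x) (hself : ∀ x, d x x = 0)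
    (htri : ∀ x y z, d x y ≤ d x z + d z y) (hadj : ∀ u v, G.Adj u v → d u v = w s(u, v))
    {x y : V} (p : G.Walk x y) {e : Sym2 V} (he : e ∈ p.edges) :
    2 * w e ≤ p.weight w + d x y := by
  induction p with
  | nil => simp at he
  | @cons x v y h p ih =>
    rw [Walk.weight_cons, two_mul]
    rcases List.mem_cons.1 (Walk.edges_cons h p ▸ he) with rfl | he
    · calc w s(x, v) + w s(x, v) = w s(x, v) + d x v := by rw [hadj x v h]
        _ ≤ w s(x, v) + (d x y + d v y) := by gcongr; exact hcomm y v ▸ htri x v y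
        _ = w s(x, v) + d v y + d x y := by ring
        _ ≤ w s(x, v) + p.weight w + d x y := by grw [dist_le_weight hself htri hadj p]
    · calc w e + w e ≤ p.weight w + d v y := by rw [← two_mul]; exact ih he
        _ ≤ p.weight w + (w s(x, v) + d x y) := by
          rw [← hadj x v h, hcomm x v]; gcongr; exact htri v y x
        _ = w s(x, v) + p.weight w + d x y := by ring

variable (G w) in
noncomputable def weightEDist (x y : V) : ℝ≥0∞ := ⨅ p : G.Walk x y, (p.weight w : ℝ≥0∞)

theorem weightEDist_le_weight {x y : V} (p : G.Walk x y) : weightEDist G w x y ≤ p.weight w :=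
  iInf_le _ p

theorem weightEDist_self (x : V) : weightEDist G w x x = 0 :=
  nonpos_iff_eq_zero.1 (by simpa using weightEDist_le_weight (w := w) (Walk.nil : G.Walk x x))

theorem weightEDist_comm (x y : V) : weightEDist G w x y = weightEDist G w y x :=
  have h (x y : V) : weightEDist G w x y ≤ weightEDist G w y x :=
    le_iInf fun p => by simpa [Walk.weight_reverse] using weightEDist_le_weight (w := w) p.reverse
  le_antisymm (h x y) (h y x)

theorem weightEDist_triangle (x y z : V) :
    weightEDist G w x y ≤ weightEDist G w x z + weightEDist G w z y :=
  ENNReal.le_iInf_add_iInf fun p q => by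
    simpa [Walk.weight_append] using weightEDist_le_weight (w := w) (p.append q)

variable (G w) in
def CycleInequality : Prop :=
  ∀ (u : V) (c : G.Walk u u), c.IsCycle → ∀ e ∈ c.edges, 2 * w e ≤ (c.edges.map w).sum

/-- Either the path uses the edge, or closing it up with the edge gives a cycle. -/
theorem weight_le_weight_of_isPath (hcyc : CycleInequality G w) {u v : V} (h : G.Adj u v)
    {p : G.Walk v u} (hp : p.IsPath) :
    w s(u, v) ≤ p.weight w := by
  by_cases hmem : s(u, v) ∈ p.edges
  · exact p.weight_le_of_mem_edges w hmem
  · have := hcyc u _ (Path.cons_isCycle ⟨p, hp⟩ h hmem) s(u, v) (by simp)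
    rw [two_mul] at this
    exact le_of_add_le_add_left (a := w s(u, v)) (by simpa [Walk.weight] using this)

theorem weight_le_weight_of_adj (hcyc : CycleInequality G w) {u v : V} (h : G.Adj u v)
    (p : G.Walk u v) :
    w s(u, v) ≤ p.weight w := by
  classical
  calc w s(u, v) ≤ p.reverse.bypass.weight w :=
        weight_le_weight_of_isPath hcyc h p.reverse.bypass_isPath
    _ ≤ p.weight w := (p.reverse.weight_bypass_le w).trans (p.weight_reverse w).le

theorem weightEDist_of_adj (hcyc : CycleInequality G w) {u v : V} (h : G.Adj u v) :
    weightEDist G w u v = w s(u, v) :=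
  le_antisymm (by simpa using weightEDist_le_weight (w := w) h.toWalk)
    (le_iInf fun p => ENNReal.coe_le_coe.2 (weight_le_weight_of_adj hcyc h p))

end SimpleGraph

/-- `w` extends to a pseudometric on `V(G)` iff for every cycle `C`,
`2·max{w(e) : e ∈ E(C)} ≤ ∑_{e ∈ E(C)} w(e)` (equivalently, `2·w(e)` is at most the
total weight of `C` for every edge `e` of `C`). -/
theorem stmt_14 {V : Type*} (G : SimpleGraph V) (w : Sym2 V → ℝ≥0) :
    (∃ d : V → V → ℝ≥0,
        (∀ x y, d x y = d y x) ∧ (∀ x, d x x = 0) ∧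
        (∀ x y z, d x y ≤ d x z + d z y) ∧
        ∀ u v, G.Adj u v → d u v = w s(u, v)) ↔
    (∀ (u : V) (c : G.Walk u u), c.IsCycle →
        ∀ e ∈ c.edges, 2 * w e ≤ (c.edges.map w).sum) := by
  constructor
  · rintro ⟨d, hcomm, hself, htri, hadj⟩ u c - e he
    simpa [hself, Walk.weight] using two_mul_le_weight_add_dist hcomm hself htri hadj c he
  · intro hcyc
    obtain ⟨d, hcomm, hself, htri, hd⟩ := exists_pseudometric_eq_of_ne_top
      (weightEDist_comm (G := G) (w := w)) weightEDist_self weightEDist_triangle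
    refine ⟨d, hcomm, hself, htri, fun u v h => ?_⟩
    have hw := weightEDist_of_adj hcyc h
    exact ENNReal.coe_injective ((hd u v (hw ▸ ENNReal.coe_ne_top)).trans hw)
end
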